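/- The LORD spending schedule α_k = γ_k β_0 + Σ_{j=1}^{|R_{k-1}|} γ_{k − t_j} β_{t_j}, where (γ_i) is nonnegative with Σ_{i=1}^∞ γ_i = 1, satisfies the wealth constraint: for all k ≥ 0, Σ_{i=1}^{k+1} α_i ≤ β_0 + Σ_{i=1}^k β_i R_i, i.e., W(k) − α_{k+1} ≥ 0. -/

import Mathlib

/-!
Exchanging the order of summation, the total spending up to time `k + 1` is
`β₀ Σ_{m ≤ k+1} γ_m + Σ_j β_{t_j} Σ_{m ≤ k+1-t_j} γ_m`: each boost is paid out along the
sequence `γ`, whose partial sums are at most `1`. The exchange rests on `j ≤ N m ↔ t j ≤ m`,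
i.e. the rejection times `t` and the rejection count `N` form a Galois connection, and the
boosts `β_{t_j}` with `t_j ≤ k` are among the terms of `Σ_{i ≤ k} β_i R_i`.
-/

open Finset

lemma sum_Ioc_sub_le_of_hasSum {γ : ℕ → ℝ} (hγ : ∀ i, 1 ≤ i → 0 ≤ γ i) {s : ℝ}
    (hs : HasSum (fun i ↦ γ (i + 1)) s) (a b : ℕ) : ∑ i ∈ Ioc a b, γ (i - a) ≤ s := by
  have hshift : ∑ i ∈ Ioc a b, γ (i - a) = ∑ m ∈ range (b - a), γ (m + 1) :=
    sum_nbij' (fun i ↦ i - a - 1) (fun m ↦ m + a + 1) (by simp; omega) (by simp; omega)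
      (by simp; omega) (fun _ _ ↦ by omega) (by simp; intro i _ _; congr 1; omega)
  rw [hshift]
  exact sum_le_hasSum _ (fun i _ ↦ hγ (i + 1) (Nat.le_add_left 1 i)) hs

lemma galoisConnection_of_leftInverse {α β : Type*} [Preorder α] [Preorder β] {t : α → β}
    {N : β → α} (hN : Monotone N) (htN : Function.LeftInverse N t)
    (hNt : ∀ j k, j ≤ N k → t j ≤ k) : GaloisConnection t N :=
  fun j k ↦ ⟨fun h ↦ htN j ▸ hN h, hNt j k⟩

lemma sum_Icc_sum_Icc_comm {M : Type*} [AddCommMonoid M] {t N : ℕ → ℕ}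
    (gc : GaloisConnection t N) (f : ℕ → ℕ → M) (k : ℕ) :
    ∑ i ∈ Icc 1 (k + 1), ∑ j ∈ Icc 1 (N (i - 1)), f i j
      = ∑ j ∈ Icc 1 (N k), ∑ i ∈ Ioc (t j) (k + 1), f i j := by
  refine sum_comm' fun i j ↦ ?_
  simp only [mem_Icc, mem_Ioc, ← gc _ _]
  omega

lemma sum_Icc_comp_le {M : Type*} [AddCommMonoid M] [PartialOrder M] [IsOrderedAddMonoid M]
    {t N : ℕ → ℕ} (gc : GaloisConnection t N) (htN : Function.LeftInverse N t) (hN0 : N 0 = 0)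
    {f : ℕ → M} (hf : ∀ i, 0 ≤ f i) (k : ℕ) :
    ∑ j ∈ Icc 1 (N k), f (t j) ≤ ∑ i ∈ Icc 1 k, f i := by
  rw [← sum_image fun _ _ _ _ h ↦ htN.injective h]
  refine sum_le_sum_of_subset_of_nonneg (fun i hi ↦ ?_) fun i _ _ ↦ hf i
  obtain ⟨j, hj, rfl⟩ := mem_image.mp hi
  simp only [mem_Icc] at hj ⊢
  have htj : t j ≠ 0 := fun h ↦ by have := htN j; rw [h, hN0] at this; omega
  exact ⟨Nat.one_le_iff_ne_zero.mpr htj, (gc j k).mpr hj.2⟩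

theorem lord_schedule_wealth_general
    (γ : ℕ → ℝ) (hγ0 : ∀ i, 1 ≤ i → 0 ≤ γ i)
    (hγsum : HasSum (fun i : ℕ => γ (i + 1)) 1)
    (β : ℕ → ℝ) (hβ : ∀ i, 0 ≤ β i)
    (R : ℕ → ℕ)
    (N : ℕ → ℕ) (hN : ∀ k, N k = ∑ i ∈ Finset.Icc 1 k, R i)
    (t : ℕ → ℕ)
    (htR : ∀ j, 1 ≤ j → R (t j) = 1)
    (htN : ∀ j, N (t j) = j)
    (hNt : ∀ k j, j ≤ N k → t j ≤ k)
    (α : ℕ → ℝ)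
    (hα : ∀ k, 1 ≤ k → α k = γ k * β 0 +
        ∑ j ∈ Finset.Icc 1 (N (k - 1)), γ (k - t j) * β (t j)) :
    ∀ k, (∑ i ∈ Finset.Icc 1 (k + 1), α i)
        ≤ β 0 + ∑ i ∈ Finset.Icc 1 k, β i * (R i : ℝ) := by
  intro k
  have hNmono : Monotone N := fun a b hab ↦ by
    simpa only [hN] using sum_le_sum_of_subset (Icc_subset_Icc_right hab)
  have gc : GaloisConnection t N :=
    galoisConnection_of_leftInverse hNmono htN fun j k ↦ hNt k j
  have hγpartial : ∀ a b, ∑ i ∈ Ioc a b, γ (i - a) ≤ 1 := sum_Ioc_sub_le_of_hasSum hγ0 hγsum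
  calc ∑ i ∈ Icc 1 (k + 1), α i
      = (∑ i ∈ Ioc 0 (k + 1), γ (i - 0)) * β 0
          + ∑ j ∈ Icc 1 (N k), (∑ i ∈ Ioc (t j) (k + 1), γ (i - t j)) * β (t j) := by
        rw [sum_congr rfl fun i hi ↦ hα i (mem_Icc.mp hi).1, sum_add_distrib, ← sum_mul,
          sum_Icc_sum_Icc_comm gc]
        simp only [sum_mul, Nat.sub_zero, ← Icc_add_one_left_eq_Ioc, zero_add]
    _ ≤ β 0 + ∑ j ∈ Icc 1 (N k), β (t j) * R (t j) := by
        refine add_le_add (mul_le_of_le_one_left (hβ 0) (hγpartial 0 (k + 1)))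
          (sum_le_sum fun j hj ↦ ?_)
        rw [htR j (mem_Icc.mp hj).1, Nat.cast_one, mul_one]
        exact mul_le_of_le_one_left (hβ _) (hγpartial _ _)
    _ ≤ β 0 + ∑ i ∈ Icc 1 k, β i * R i := by
        gcongr
        exact sum_Icc_comp_le gc htN (by simp [hN])
          (fun i ↦ mul_nonneg (hβ i) (Nat.cast_nonneg _)) k

/-- The LORD spending schedule respects the GAI wealth constraint. -/
theorem lord_schedule_wealth
    (γ : ℕ → ℝ) (hγ0 : ∀ i, 1 ≤ i → 0 ≤ γ i)
    (hγsum : HasSum (fun i : ℕ => γ (i + 1)) 1)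
    (β : ℕ → ℝ) (hβ : ∀ i, 0 ≤ β i)
    (R : ℕ → ℕ) (hR : ∀ i, R i ≤ 1)
    (N : ℕ → ℕ) (hN : ∀ k, N k = ∑ i ∈ Finset.Icc 1 k, R i)
    (t : ℕ → ℕ) (ht0 : t 0 = 0) (htmono : StrictMono t)
    (htR : ∀ j, 1 ≤ j → R (t j) = 1)
    (htN : ∀ j, N (t j) = j)
    (hNt : ∀ k j, j ≤ N k → t j ≤ k)
    (α : ℕ → ℝ)
    (hα : ∀ k, 1 ≤ k → α k = γ k * β 0 +
        ∑ j ∈ Finset.Icc 1 (N (k - 1)), γ (k - t j) * β (t j)) :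
    ∀ k, (∑ i ∈ Finset.Icc 1 (k + 1), α i)
        ≤ β 0 + ∑ i ∈ Finset.Icc 1 k, β i * (R i : ℝ) :=
  lord_schedule_wealth_general γ hγ0 hγsum β hβ R N hN t htR htN hNt α hα
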